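/- arXiv:2009.14197 — 6 statements merged into one kernel-verified Lean document; each statement's English description precedes it below -/
import Mathlib

section
/- For positive definite matrices A, B and any real λ, A♯_λ B = (AB^{-1})^{1-λ} B, where the power of AB^{-1} is defined via its similarity to the positive definite matrix B^{-1/2}AB^{-1/2}. -/
/-!
Put `V = B^{-1/2} A^{1/2}`. Then `V V* = B^{-1/2} A B^{-1/2} =: N` and
`V* V = (A^{-1/2} B A^{-1/2})⁻¹ =: M⁻¹`. Since `(V V*) V = V (V* V)`, the same intertwining
holds for any function of these two Hermitian matrices, as it agrees on their (finite) spectra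
with a polynomial; in particular `N^{-λ} V = V M^λ`. Hence
`A^{1/2} M^λ A^{1/2} = B^{1/2} V M^λ V* B^{1/2} = B^{1/2} N^{-λ} V V* B^{1/2}`, which is
`B^{1/2} N^{1-λ} B^{1/2}`, and `B^{1/2} = B^{-1/2} B`.
-/

open Matrix ComplexOrder

/-- Real power of a (Hermitian, in practice positive definite) matrix via spectral calculus. -/
noncomputable def mpow {m : Type*} [Fintype m] [DecidableEq m]
    (A : Matrix m m ℂ) (r : ℝ) : Matrix m m ℂ :=
  if h : A.IsHermitian then
    (h.eigenvectorUnitary : Matrix m m ℂ) *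
      Matrix.diagonal (fun i => ((h.eigenvalues i ^ r : ℝ) : ℂ)) *
      star (h.eigenvectorUnitary : Matrix m m ℂ)
  else A

/-- λ-weighted geometric mean `A♯_λ B = A^{1/2}(A^{-1/2} B A^{-1/2})^λ A^{1/2}`. -/
noncomputable def gmean {m : Type*} [Fintype m] [DecidableEq m]
    (A B : Matrix m m ℂ) (lam : ℝ) : Matrix m m ℂ :=
  mpow A (1/2) * mpow (mpow A (-(1/2)) * B * mpow A (-(1/2))) lam * mpow A (1/2)

open Polynomial

theorem Set.Finite.exists_polynomial_eqOn {K : Type*} [Field K] (f : K → K) {s : Set K}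
    (hs : s.Finite) : ∃ p : K[X], Set.EqOn f (fun x => p.eval x) s := by
  classical
  refine ⟨Lagrange.interpolate hs.toFinset id f, fun x hx => ?_⟩
  exact (Lagrange.eval_interpolate_at_node f (Set.injOn_id _) (hs.mem_toFinset.mpr hx)).symm

theorem SemiconjBy.aeval {R A : Type*} [CommSemiring R] [Semiring A] [Algebra R A]
    {a x y : A} (h : SemiconjBy a x y) (p : R[X]) : SemiconjBy a (aeval x p) (aeval y p) := by
  induction p using Polynomial.induction_on' with
  | add p q hp hq => simpa only [map_add] using hp.add_right hq
  | monomial n c =>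
    simpa only [aeval_monomial, ← Algebra.smul_def] using (h.pow_right n).smul_right c

namespace Matrix

variable {n 𝕜 : Type*} [Fintype n] [DecidableEq n] [RCLike 𝕜]

theorem PosDef.pos_of_mem_spectrum {A : Matrix n n 𝕜} (hA : A.PosDef) {x : ℝ}
    (hx : x ∈ spectrum ℝ A) : 0 < x := by
  rw [hA.isHermitian.spectrum_real_eq_range_eigenvalues] at hx
  obtain ⟨i, rfl⟩ := hx
  exact hA.eigenvalues_pos i

theorem cfc_mul_star_self_mul (f : ℝ → ℝ) (V : Matrix n n 𝕜) :
    cfc f (V * star V) * V = V * cfc f (star V * V) := by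
  obtain ⟨p, hp⟩ := ((V * star V).finite_real_spectrum.union
    (star V * V).finite_real_spectrum).exists_polynomial_eqOn f
  rw [cfc_congr (hp.mono Set.subset_union_left), cfc_congr (hp.mono Set.subset_union_right),
    cfc_polynomial p (V * star V), cfc_polynomial p (star V * V)]
  exact (SemiconjBy.aeval (mul_assoc V (star V) V).symm p).symm

end Matrix

section mpow

variable {m : Type*} [Fintype m] [DecidableEq m] {A : Matrix m m ℂ}

theorem mpow_eq_cfc (hA : A.IsHermitian) (r : ℝ) : mpow A r = cfc (fun x : ℝ => x ^ r) A := by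
  rw [hA.cfc_eq, mpow, dif_pos hA]
  rfl

theorem isHermitian_mpow (hA : A.IsHermitian) (r : ℝ) : (mpow A r).IsHermitian := by
  rw [mpow_eq_cfc hA]
  exact cfc_predicate _ A

theorem star_mpow (hA : A.IsHermitian) (r : ℝ) : star (mpow A r) = mpow A r :=
  (isHermitian_mpow hA r).eq

theorem mpow_zero (hA : A.IsHermitian) : mpow A 0 = 1 := by
  rw [mpow_eq_cfc hA, cfc_congr fun x _ => Real.rpow_zero x]
  exact cfc_const_one ℝ A

theorem mpow_one (hA : A.IsHermitian) : mpow A 1 = A := by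
  rw [mpow_eq_cfc hA, cfc_congr fun x _ => Real.rpow_one x]
  exact cfc_id' ℝ A

theorem mpow_add (hA : A.PosDef) (r s : ℝ) : mpow A (r + s) = mpow A r * mpow A s := by
  rw [mpow_eq_cfc hA.isHermitian, mpow_eq_cfc hA.isHermitian, mpow_eq_cfc hA.isHermitian,
    ← cfc_mul _ _ A (A.finite_real_spectrum.continuousOn _)
      (A.finite_real_spectrum.continuousOn _)]
  exact cfc_congr fun x hx => Real.rpow_add (hA.pos_of_mem_spectrum hx) r s

theorem mpow_mul (hA : A.PosDef) (r s : ℝ) : mpow A (r * s) = mpow (mpow A r) s := by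
  rw [mpow_eq_cfc (isHermitian_mpow hA.isHermitian r), mpow_eq_cfc hA.isHermitian,
    mpow_eq_cfc hA.isHermitian,
    ← cfc_comp' _ _ A ((A.finite_real_spectrum.image _).continuousOn _)
      (A.finite_real_spectrum.continuousOn _) hA.isHermitian.isSelfAdjoint]
  exact cfc_congr fun x hx => Real.rpow_mul (hA.pos_of_mem_spectrum hx).le r s

theorem mul_mpow (hA : A.PosDef) (r : ℝ) : A * mpow A r = mpow A (1 + r) := by
  rw [mpow_add hA, mpow_one hA.isHermitian]

theorem mpow_mul_self (hA : A.PosDef) (r : ℝ) : mpow A r * A = mpow A (r + 1) := by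
  rw [mpow_add hA, mpow_one hA.isHermitian]

theorem mpow_half_mul_mpow_half (hA : A.PosDef) : mpow A (1/2) * mpow A (1/2) = A := by
  rw [← mpow_add hA, add_halves, mpow_one hA.isHermitian]

theorem mpow_neg_mul_mpow (hA : A.PosDef) (r : ℝ) : mpow A (-r) * mpow A r = 1 := by
  rw [← mpow_add hA, neg_add_cancel, mpow_zero hA.isHermitian]

theorem mpow_mul_mpow_neg (hA : A.PosDef) (r : ℝ) : mpow A r * mpow A (-r) = 1 := by
  rw [← mpow_add hA, add_neg_cancel, mpow_zero hA.isHermitian]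

theorem isUnit_mpow (hA : A.PosDef) (r : ℝ) : IsUnit (mpow A r) :=
  ⟨⟨_, _, mpow_mul_mpow_neg hA r, mpow_neg_mul_mpow hA r⟩, rfl⟩

theorem Matrix.PosDef.mpow_mul_mul_mpow {B : Matrix m m ℂ} (hA : A.PosDef) (hB : B.PosDef)
    (r : ℝ) : (mpow A r * B * mpow A r).PosDef := by
  simpa only [star_mpow hA.isHermitian] using
    (IsUnit.posDef_star_right_conjugate_iff (isUnit_mpow hA r)).mpr hB

theorem mpow_mpow_neg_mul_mul_mpow_neg {B : Matrix m m ℂ} (hA : A.PosDef) (hB : B.PosDef)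
    (r : ℝ) :
    mpow (mpow A (-r) * B * mpow A (-r)) (-1) = mpow A r * mpow B (-1) * mpow A r := by
  have hC := hA.mpow_mul_mul_mpow hB (-r)
  refine left_inv_eq_right_inv (a := mpow A (-r) * B * mpow A (-r)) ?_ ?_
  · rw [mpow_mul_self hC, neg_add_cancel, mpow_zero hC.isHermitian]
  · simp only [mul_assoc]
    rw [← mul_assoc (mpow A (-r)) (mpow A r), mpow_neg_mul_mpow hA, one_mul, ← mul_assoc B,
      mul_mpow hB, add_neg_cancel, mpow_zero hB.isHermitian, one_mul, mpow_neg_mul_mpow hA]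

theorem mpow_mul_star_self_mul (V : Matrix m m ℂ) (r : ℝ) :
    mpow (V * star V) r * V = V * mpow (star V * V) r := by
  have hVV' : (V * star V).IsHermitian := isHermitian_mul_conjTranspose_self V
  have hV'V : (star V * V).IsHermitian := isHermitian_conjTranspose_mul_self V
  rw [mpow_eq_cfc hVV', mpow_eq_cfc hV'V]
  exact cfc_mul_star_self_mul _ V

end mpow

/-- `A♯_λ B = (AB⁻¹)^{1-λ} B`, where the power of `AB⁻¹` is defined via its similarity
`AB⁻¹ = B^{1/2}(B^{-1/2}AB^{-1/2})B^{-1/2}` to the positive definite matrix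
`B^{-1/2}AB^{-1/2}`. -/
theorem gmean_eq_pow_mul {m : Type*} [Fintype m] [DecidableEq m]
    (A B : Matrix m m ℂ) (hA : A.PosDef) (hB : B.PosDef) (lam : ℝ) :
    gmean A B lam =
      (mpow B (1/2) * mpow (mpow B (-(1/2)) * A * mpow B (-(1/2))) (1 - lam) * mpow B (-(1/2)))
        * B := by
  set M := mpow A (-(1/2)) * B * mpow A (-(1/2)) with hM_def
  set N := mpow B (-(1/2)) * A * mpow B (-(1/2))
  have hM : M.PosDef := hA.mpow_mul_mul_mpow hB _
  have hN : N.PosDef := hB.mpow_mul_mul_mpow hA _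
  set V := mpow B (-(1/2)) * mpow A (1/2) with hV_def
  have hV_star : star V = mpow A (1/2) * mpow B (-(1/2)) := by
    rw [hV_def, star_mul, star_mpow hA.isHermitian, star_mpow hB.isHermitian]
  have hV_mul_star : V * star V = N := by
    rw [hV_star, hV_def, mul_assoc, ← mul_assoc (mpow A _), mpow_half_mul_mpow_half hA,
      ← mul_assoc]
  have hstar_mul_V : star V * V = mpow M (-1) := by
    rw [hV_star, hV_def, hM_def, mpow_mpow_neg_mul_mul_mpow_neg hA hB, mul_assoc, mul_assoc,
      ← mul_assoc (mpow B _), ← mpow_add hB]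
    norm_num
  have hintertwine : mpow N (-lam) * V = V * mpow M lam := by
    rw [← hV_mul_star, mpow_mul_star_self_mul, hstar_mul_V, ← mpow_mul hM, neg_one_mul, neg_neg]
  have hB_half_mul_V : mpow B (1/2) * V = mpow A (1/2) := by
    rw [hV_def, ← mul_assoc, mpow_mul_mpow_neg hB, one_mul]
  have hV_star_mul_B_half : star V * mpow B (1/2) = mpow A (1/2) := by
    rw [hV_star, mul_assoc, mpow_neg_mul_mpow hB, mul_one]
  calc gmean A B lam
      = (mpow B (1/2) * V) * mpow M lam * (star V * mpow B (1/2)) := by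
        rw [hB_half_mul_V, hV_star_mul_B_half]; rfl
    _ = mpow B (1/2) * (mpow N (-lam) * (V * star V)) * mpow B (1/2) := by
        rw [← mul_assoc (mpow N _), hintertwine]; simp only [mul_assoc]
    _ = mpow B (1/2) * mpow N (-lam + 1) * (mpow B (-(1/2)) * B) := by
        rw [hV_mul_star, mpow_mul_self hN, mpow_mul_self hB]; norm_num
    _ = _ := by rw [neg_add_eq_sub]; simp only [mul_assoc]
end

section
/- Let Y be a positive definite n×n matrix and p ∈ (2,∞). Then the function ω ↦ Tr(Y ω^{1−2/p}) on the set of positive definite density matrices is strictly concave. -/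
/-!
For `0 < r < 1` and `x ≥ 0`, `x ^ r = K⁻¹ ∫₀^∞ t ^ r (t⁻¹ - (t + x)⁻¹) dt` with `K > 0`.
Diagonalising `A`, this gives
`Re Tr(Y A^r) = K⁻¹ ∫₀^∞ (t ^ (r - 1) Re Tr Y - t ^ r Re Tr(Y (t + A)⁻¹)) dt`, so it suffices that
`A ↦ Re Tr(Y A⁻¹)` is strictly convex on positive definite matrices. With `C = (1 - s) A + s B`
and `X = A⁻¹ - B⁻¹`, the gap `(1 - s) A⁻¹ + s B⁻¹ - C⁻¹ = s (1 - s) X ((1 - s) B⁻¹ + s A⁻¹)⁻¹ X`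
is positive semidefinite and nonzero when `A ≠ B`, and `Re Tr(Y D) > 0` for every such `D`
because `Y` is positive definite. Strict concavity survives integration in `t`; the theorem is
the case `r = 1 - 2 / p`.
-/

open Matrix ComplexOrder

theorem StrictConcaveOn.const_mul {E : Type*} [AddCommMonoid E] [Module ℝ E] {s : Set E}
    {f : E → ℝ} (hf : StrictConcaveOn ℝ s f) {c : ℝ} (hc : 0 < c) :
    StrictConcaveOn ℝ s fun x => c * f x :=
  ⟨hf.1, fun x hx y hy hxy a b ha hb hab => by
    have := mul_lt_mul_of_pos_left (hf.2 hx hy hxy ha hb hab) hc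
    simp only [smul_eq_mul] at this ⊢
    linarith⟩

theorem MeasureTheory.integral_pos_of_ae_pos {α : Type*} [MeasurableSpace α] {μ : Measure α}
    {f : α → ℝ} (hμ : μ ≠ 0) (hf : ∀ᵐ t ∂μ, 0 < f t) (hfi : Integrable f μ) : 0 < ∫ t, f t ∂μ := by
  rw [integral_pos_iff_support_of_nonneg_ae (hf.mono fun _ ht => ht.le) hfi]
  calc 0 < μ Set.univ := Measure.measure_univ_pos.mpr hμ
    _ ≤ μ (Function.support f) := measure_mono_ae (hf.mono fun _ ht _ => ht.ne')

open MeasureTheory in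
theorem StrictConcaveOn.integral {α E : Type*} [MeasurableSpace α] {μ : Measure α}
    [AddCommMonoid E] [Module ℝ E] {s : Set E} {g : α → E → ℝ} (hμ : μ ≠ 0)
    (hg : ∀ᵐ t ∂μ, StrictConcaveOn ℝ s (g t)) (hint : ∀ x ∈ s, Integrable (g · x) μ) :
    StrictConcaveOn ℝ s fun x => ∫ t, g t x ∂μ := by
  have : (ae μ).NeBot := ae_neBot.mpr hμ
  obtain ⟨-, hs, -⟩ := hg.exists
  refine ⟨hs, fun x hx y hy hxy a b ha hb hab => ?_⟩
  have hmem := hs hx hy ha.le hb.le hab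
  have hcombo : Integrable (fun t => a * g t x + b * g t y) μ :=
    ((hint x hx).const_mul a).add ((hint y hy).const_mul b)
  have hgap := integral_pos_of_ae_pos hμ
    (hg.mono fun t ht => sub_pos.mpr <| by simpa only [smul_eq_mul] using ht.2 hx hy hxy ha hb hab)
    ((hint _ hmem).sub hcombo)
  rw [integral_sub (hint _ hmem) hcombo,
    integral_add ((hint x hx).const_mul a) ((hint y hy).const_mul b), integral_const_mul,
    integral_const_mul] at hgap
  simp only [smul_eq_mul]
  linarith

namespace Matrix

variable {m : Type*}

theorem convex_setOf_posDef : Convex ℝ {A : Matrix m m ℂ | A.PosDef} :=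
  convex_iff_forall_pos.mpr fun _ hA _ hB _ _ ha hb _ => (hA.smul ha).add (hB.smul hb)

theorem convex_setOf_posSemidef : Convex ℝ {A : Matrix m m ℂ | A.PosSemidef} :=
  fun _ hA _ hB _ _ ha hb _ => (hA.smul ha).add (hB.smul hb)

variable [Fintype m]

theorem PosDef.conjTranspose_mul_mul_same_ne_zero {M X : Matrix m m ℂ} (hM : M.PosDef)
    (hX : X ≠ 0) : Xᴴ * M * X ≠ 0 := by
  obtain ⟨v, hv⟩ : ∃ v, X *ᵥ v ≠ 0 := by simpa [ext_iff_mulVec] using hX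
  intro h
  have := hM.dotProduct_mulVec_pos hv
  rw [star_mulVec, ← dotProduct_mulVec, mulVec_mulVec, mulVec_mulVec, h] at this
  simp at this

variable [DecidableEq m]

theorem IsHermitian.mpow_eq_cfc {A : Matrix m m ℂ} (hA : A.IsHermitian) (r : ℝ) :
    mpow A r = cfc (fun x : ℝ => x ^ r) A := by
  rw [mpow, dif_pos hA, hA.cfc_eq, IsHermitian.cfc, Unitary.conjStarAlgAut_apply]
  rfl

theorem IsHermitian.re_trace_mul_cfc (Y : Matrix m m ℂ) {A : Matrix m m ℂ} (hA : A.IsHermitian)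
    (f : ℝ → ℝ) :
    (Y * cfc f A).trace.re = ∑ i, f (hA.eigenvalues i) *
      ((star (hA.eigenvectorUnitary : Matrix m m ℂ) * Y * hA.eigenvectorUnitary) i i).re := by
  rw [hA.cfc_eq, IsHermitian.cfc, Unitary.conjStarAlgAut_apply, ← Matrix.mul_assoc,
    ← Matrix.mul_assoc, trace_mul_cycle, ← Matrix.mul_assoc, trace, Complex.re_sum]
  refine Finset.sum_congr rfl fun i _ => ?_
  simp [mul_diagonal, mul_comm]

theorem PosDef.re_star_mul_mul_diag_pos {Y : Matrix m m ℂ} (hY : Y.PosDef)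
    (U : unitary (Matrix m m ℂ)) (i : m) :
    0 < ((star (U : Matrix m m ℂ) * Y * U) i i).re :=
  (Complex.pos_iff.mp ((hY.conjTranspose_mul_mul_same
    (mulVec_injective_of_isUnit (Unitary.isUnit_coe))).diag_pos)).1

theorem PosDef.re_trace_mul_pos {Y D : Matrix m m ℂ} (hY : Y.PosDef) (hD : D.PosSemidef)
    (hD0 : D ≠ 0) : 0 < (Y * D).trace.re := by
  have hnz : hD.1.eigenvalues ≠ 0 := fun h => hD0 (hD.1.eigenvalues_eq_zero_iff.mp h)
  obtain ⟨i, hi⟩ := Function.ne_iff.mp hnz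
  rw [← cfc_id' ℝ D hD.1.isSelfAdjoint, hD.1.re_trace_mul_cfc]
  exact Finset.sum_pos' (fun j _ => mul_nonneg (hD.eigenvalues_nonneg j)
    (hY.re_star_mul_mul_diag_pos _ j).le)
    ⟨i, Finset.mem_univ _, mul_pos ((hD.eigenvalues_nonneg i).lt_of_ne' hi)
      (hY.re_star_mul_mul_diag_pos _ i)⟩

theorem smul_inv_add_smul_inv_sub_inv {A B : Matrix m m ℂ} (hA : IsUnit A.det) (hB : IsUnit B.det)
    {s t : ℝ} (hst : s + t = 1) (hC : IsUnit (s • A + t • B).det) :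
    s • A⁻¹ + t • B⁻¹ - (s • A + t • B)⁻¹ =
      (s * t) • ((A⁻¹ - B⁻¹) * (s • B⁻¹ + t • A⁻¹)⁻¹ * (A⁻¹ - B⁻¹)) := by
  obtain rfl : s = 1 - t := eq_sub_of_add_eq hst
  set C := (1 - t) • A + t • B with hCdef
  have hCA : C - A = t • (B - A) := by rw [hCdef]; module
  have hBC : B - C = (1 - t) • (B - A) := by rw [hCdef]; module
  have hACB : A⁻¹ * C * B⁻¹ = (1 - t) • B⁻¹ + t • A⁻¹ := by
    simp only [hCdef, Matrix.mul_add, Matrix.add_mul, Matrix.mul_smul, Matrix.smul_mul,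
      Matrix.mul_assoc, nonsing_inv_mul_cancel_left _ _ hA, mul_nonsing_inv _ hB, Matrix.mul_one]
  have hX : A⁻¹ - B⁻¹ = A⁻¹ * (B - A) * B⁻¹ :=
    inv_sub_inv (by simp only [isUnit_iff_isUnit_det, hA, hB])
  calc (1 - t) • A⁻¹ + t • B⁻¹ - C⁻¹ = A⁻¹ - A⁻¹ * C * B⁻¹ - C⁻¹ + B⁻¹ := by
        rw [hACB]; module
    _ = A⁻¹ * (C - A) * C⁻¹ * (B - C) * B⁻¹ := by
        simp only [Matrix.mul_sub, Matrix.sub_mul, Matrix.mul_assoc,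
          nonsing_inv_mul_cancel_left _ _ hC, mul_nonsing_inv _ hB, mul_nonsing_inv _ hC,
          nonsing_inv_mul _ hA, Matrix.mul_one, Matrix.one_mul]
        abel
    _ = ((1 - t) * t) • (A⁻¹ * (B - A) * C⁻¹ * (B - A) * B⁻¹) := by
        rw [hCA, hBC]
        simp only [Matrix.mul_smul, Matrix.smul_mul, smul_smul, mul_comm]
    _ = ((1 - t) * t) • ((A⁻¹ - B⁻¹) * (B * C⁻¹ * A) * (A⁻¹ - B⁻¹)) := by
        rw [hX]
        simp only [Matrix.mul_assoc, nonsing_inv_mul_cancel_left _ _ hB,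
          mul_nonsing_inv_cancel_left _ _ hA]
    _ = ((1 - t) * t) • ((A⁻¹ - B⁻¹) * ((1 - t) • B⁻¹ + t • A⁻¹)⁻¹ * (A⁻¹ - B⁻¹)) := by
        rw [← hACB, Matrix.mul_inv_rev, Matrix.mul_inv_rev, nonsing_inv_nonsing_inv _ hB,
          nonsing_inv_nonsing_inv _ hA, Matrix.mul_assoc B]

theorem PosDef.strictConvexOn_re_trace_mul_inv {Y : Matrix m m ℂ} (hY : Y.PosDef) :
    StrictConvexOn ℝ {A : Matrix m m ℂ | A.PosDef} fun A => (Y * A⁻¹).trace.re := by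
  refine ⟨convex_setOf_posDef, fun A hA B hB hAB s t hs ht hst => ?_⟩
  have hAu : IsUnit A.det := hA.det_pos.ne'.isUnit
  have hX : A⁻¹ - B⁻¹ ≠ 0 := fun h => hAB (inv_inj (sub_eq_zero.mp h) hAu)
  have hM : (s • B⁻¹ + t • A⁻¹)⁻¹.PosDef := ((hB.inv.smul hs).add (hA.inv.smul ht)).inv
  have hXh : (A⁻¹ - B⁻¹)ᴴ = A⁻¹ - B⁻¹ := (hA.inv.1.sub hB.inv.1).eq
  have hD := (hM.posSemidef.conjTranspose_mul_mul_same (A⁻¹ - B⁻¹)).smul (mul_pos hs ht).le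
  have hD0 := smul_ne_zero (mul_pos hs ht).ne' (hM.conjTranspose_mul_mul_same_ne_zero hX)
  rw [hXh, ← smul_inv_add_smul_inv_sub_inv hAu hB.det_pos.ne'.isUnit hst
    ((hA.smul hs).add (hB.smul ht)).det_pos.ne'.isUnit] at hD hD0
  have := hY.re_trace_mul_pos hD hD0
  simp only [Matrix.mul_sub, Matrix.mul_add, Matrix.mul_smul, trace_sub, trace_add, trace_smul,
    Complex.sub_re, Complex.add_re, Complex.real_smul, Complex.re_ofReal_mul] at this
  simp only [smul_eq_mul]
  linarith

open MeasureTheory Set Real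

theorem PosSemidef.cfc_rpowIntegrand₀₁ {A : Matrix m m ℂ} (hA : A.PosSemidef) {p t : ℝ}
    (hp : p ≠ 1) (ht : 0 < t) :
    cfc (rpowIntegrand₀₁ p t) A = t ^ (p - 1) • 1 - t ^ p • (t • 1 + A)⁻¹ := by
  have hspec : ∀ x ∈ spectrum ℝ A, t + x ≠ 0 := by
    rw [hA.1.spectrum_real_eq_range_eigenvalues]
    rintro _ ⟨i, rfl⟩
    exact (add_pos_of_pos_of_nonneg ht (hA.eigenvalues_nonneg i)).ne'
  have hcont (f : ℝ → ℝ) : ContinuousOn f (spectrum ℝ A) := A.finite_real_spectrum.continuousOn f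
  have hsa : IsSelfAdjoint A := hA.1
  rw [rpowIntegrand₀₁_eq_sub hp ht, cfc_sub _ _ A (hcont _) (hcont _), cfc_const _ A hsa,
    cfc_const_mul _ _ A (hcont _), cfc_inv _ A hspec (hcont _) hsa,
    cfc_const_add _ _ A (hcont _) hsa, cfc_id' ℝ A hsa, ← nonsing_inv_eq_ringInverse,
    Algebra.algebraMap_eq_smul_one, Algebra.algebraMap_eq_smul_one]

theorem PosDef.strictConcaveOn_re_trace_mul_cfc_rpowIntegrand₀₁ {Y : Matrix m m ℂ}
    (hY : Y.PosDef) {p t : ℝ} (hp : p ≠ 1) (ht : 0 < t) :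
    StrictConcaveOn ℝ {A : Matrix m m ℂ | A.PosSemidef}
      fun A => (Y * cfc (rpowIntegrand₀₁ p t) A).trace.re := by
  have hshift : {A : Matrix m m ℂ | A.PosSemidef} ⊆ (t • 1 + ·) ⁻¹' {A | A.PosDef} :=
    fun A hA => (PosDef.one.smul ht).add_posSemidef hA
  have hconv := ((hY.smul (rpow_pos_of_pos ht p)).strictConvexOn_re_trace_mul_inv.translate_right
    (t • 1)).subset hshift convex_setOf_posSemidef
  refine (hconv.neg.add_const (t ^ (p - 1) * Y.trace.re)).congr fun A hA => ?_
  rw [PosSemidef.cfc_rpowIntegrand₀₁ hA hp ht]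
  simp only [Pi.add_apply, Pi.neg_apply, Function.comp_apply, Matrix.mul_sub, Matrix.mul_smul,
    Matrix.smul_mul, Matrix.mul_one, trace_sub, trace_smul, Complex.sub_re, Complex.real_smul,
    Complex.re_ofReal_mul]
  ring

theorem PosSemidef.integrableOn_re_trace_mul_cfc_rpowIntegrand₀₁ (Y : Matrix m m ℂ)
    {A : Matrix m m ℂ} (hA : A.PosSemidef) {p : ℝ} (hp : p ∈ Ioo 0 1) :
    IntegrableOn (fun t => (Y * cfc (rpowIntegrand₀₁ p t) A).trace.re) (Ioi 0) := by
  simp_rw [hA.1.re_trace_mul_cfc]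
  exact integrable_finsetSum _ fun i _ =>
    (integrableOn_rpowIntegrand₀₁_Ioi hp (hA.eigenvalues_nonneg i)).mul_const _

theorem PosSemidef.re_trace_mul_mpow_eq_integral (Y : Matrix m m ℂ) {A : Matrix m m ℂ}
    (hA : A.PosSemidef) {p : ℝ} (hp : p ∈ Ioo 0 1) :
    (Y * mpow A p).trace.re = (∫ t in Ioi 0, rpowIntegrand₀₁ p t 1)⁻¹ *
      ∫ t in Ioi 0, (Y * cfc (rpowIntegrand₀₁ p t) A).trace.re := by
  simp_rw [hA.1.mpow_eq_cfc, hA.1.re_trace_mul_cfc]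
  rw [integral_finsetSum _ fun i _ =>
    (integrableOn_rpowIntegrand₀₁_Ioi hp (hA.eigenvalues_nonneg i)).mul_const _, Finset.mul_sum]
  refine Finset.sum_congr rfl fun i _ => ?_
  rw [integral_mul_const, rpow_eq_const_mul_integral hp (hA.eigenvalues_nonneg i), mul_assoc]

theorem PosDef.strictConcaveOn_re_trace_mul_mpow {Y : Matrix m m ℂ} (hY : Y.PosDef) {p : ℝ}
    (hp : p ∈ Ioo 0 1) :
    StrictConcaveOn ℝ {A : Matrix m m ℂ | A.PosSemidef} fun A => (Y * mpow A p).trace.re := by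
  have hμ : volume.restrict (Ioi (0 : ℝ)) ≠ 0 := by simp [Measure.restrict_eq_zero]
  refine (StrictConcaveOn.integral hμ
      (ae_restrict_of_forall_mem measurableSet_Ioi fun t ht =>
        hY.strictConcaveOn_re_trace_mul_cfc_rpowIntegrand₀₁ hp.2.ne ht)
      fun A hA => hA.integrableOn_re_trace_mul_cfc_rpowIntegrand₀₁ Y hp).const_mul
    (inv_pos.mpr (integral_rpowIntegrand₀₁_one_pos hp)) |>.congr fun A hA =>
      (hA.re_trace_mul_mpow_eq_integral Y hp).symm

end Matrix

theorem trace_pow_strictConcave_general {n : ℕ} (Y : Matrix (Fin n) (Fin n) ℂ) (hY : Y.PosDef)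
    (p : ℝ) (hp : 2 < p)
    (ω₀ ω₁ : Matrix (Fin n) (Fin n) ℂ) (h₀ : ω₀.PosDef) (h₁ : ω₁.PosDef)
    (hne : ω₀ ≠ ω₁)
    (t : ℝ) (ht : t ∈ Set.Ioo (0:ℝ) 1) :
    (1 - t) * ((Y * mpow ω₀ (1 - 2/p)).trace).re +
        t * ((Y * mpow ω₁ (1 - 2/p)).trace).re <
      ((Y * mpow ((1 - t) • ω₀ + t • ω₁) (1 - 2/p)).trace).re := by
  have hp0 : 0 < p := by linarith
  have hexp : 1 - 2 / p ∈ Set.Ioo (0 : ℝ) 1 :=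
    ⟨sub_pos.mpr ((div_lt_one hp0).mpr hp), sub_lt_self 1 (div_pos two_pos hp0)⟩
  simpa only [smul_eq_mul] using (hY.strictConcaveOn_re_trace_mul_mpow hexp).2 h₀.posSemidef
    h₁.posSemidef hne (sub_pos.mpr ht.2) ht.1 (sub_add_cancel 1 t)

/-- For positive definite `Y` and `p ∈ (2,∞)`, the map `ω ↦ Tr(Y ω^{1-2/p})` is strictly
concave on positive definite density matrices. -/
theorem trace_pow_strictConcave {n : ℕ} (Y : Matrix (Fin n) (Fin n) ℂ) (hY : Y.PosDef)
    (p : ℝ) (hp : 2 < p)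
    (ω₀ ω₁ : Matrix (Fin n) (Fin n) ℂ) (h₀ : ω₀.PosDef) (h₁ : ω₁.PosDef)
    (ht₀ : ω₀.trace = 1) (ht₁ : ω₁.trace = 1) (hne : ω₀ ≠ ω₁)
    (t : ℝ) (ht : t ∈ Set.Ioo (0:ℝ) 1) :
    (1 - t) * ((Y * mpow ω₀ (1 - 2/p)).trace).re +
        t * ((Y * mpow ω₁ (1 - 2/p)).trace).re <
      ((Y * mpow ((1 - t) • ω₀ + t • ω₁) (1 - 2/p)).trace).re :=
  trace_pow_strictConcave_general Y hY p hp ω₀ ω₁ h₀ h₁ hne t ht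
end

section
/- Let ρ, σ be positive definite density matrices and p ∈ [1,2). Then the infimum over positive definite density matrices ω of Tr(ρ^{1/2} σ^{2/p−1} ρ^{1/2} ω^{1−2/p}) equals (Tr[(ρ^{1/2} σ^{2/p−1} ρ^{1/2})^{p/2}])^{2/p}, attained uniquely at ω_* = Y^{p/2}/Tr(Y^{p/2}) with Y = ρ^{1/2} σ^{2/p−1} ρ^{1/2}. -/
open Matrix ComplexOrder

/-!
Write `ω₀ = Y^{p/2} / Tr Y^{p/2}` and `α = 2/p > 1`. Functional calculus gives
`Y = (Tr Y^{p/2})^α ω₀^α`, so the claim is that `Tr(ω₀^α ω^{1-α}) ≥ 1` for density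
matrices, with equality only at `ω = ω₀` (positivity of the Petz–Rényi divergence of
order `α > 1`). Diagonalize `ω₀ = U diag(x) U*` and `ω = V diag(y) V*`; then
`Tr(ω₀^α ω^{1-α}) = ∑ c_ij x_i^α y_j^{1-α}` with `c_ij = |(U*V)_ij|²` doubly stochastic.
Bernoulli's inequality gives `x^α y^{1-α} ≥ α x - (α-1) y`, strictly unless `x = y`, and the
right-hand sides sum to `1` against `c`. Equality forces `y_j = x_i` whenever `(U*V)_ij ≠ 0`,
which says exactly that `V diag(y) V* = U diag(x) U*`.
-/

theorem rpow_mul_rpow_one_sub_eq {x y : ℝ} (hx : 0 < x) (hy : 0 < y) (α : ℝ) :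
    x ^ α * y ^ (1 - α) = y * (1 + (x / y - 1)) ^ α := by
  rw [add_sub_cancel, Real.div_rpow hx.le hy.le, Real.rpow_sub hy, Real.rpow_one]
  field_simp

theorem mul_sub_mul_le_rpow_mul_rpow {x y α : ℝ} (hx : 0 < x) (hy : 0 < y) (hα : 1 ≤ α) :
    α * x - (α - 1) * y ≤ x ^ α * y ^ (1 - α) := by
  have hxy : -1 ≤ x / y - 1 := by linarith [div_pos hx hy]
  calc α * x - (α - 1) * y = y * (1 + α * (x / y - 1)) := by field_simp; ring
    _ ≤ _ := by
      rw [rpow_mul_rpow_one_sub_eq hx hy]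
      exact mul_le_mul_of_nonneg_left (one_add_mul_self_le_rpow_one_add hxy hα) hy.le

theorem mul_sub_mul_lt_rpow_mul_rpow {x y α : ℝ} (hx : 0 < x) (hy : 0 < y) (hα : 1 < α)
    (hne : x ≠ y) : α * x - (α - 1) * y < x ^ α * y ^ (1 - α) := by
  have hxy : -1 ≤ x / y - 1 := by linarith [div_pos hx hy]
  have hxy' : x / y - 1 ≠ 0 := by rwa [sub_ne_zero, ne_eq, div_eq_one_iff_eq hy.ne']
  calc α * x - (α - 1) * y = y * (1 + α * (x / y - 1)) := by field_simp; ring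
    _ < _ := by
      rw [rpow_mul_rpow_one_sub_eq hx hy]
      exact mul_lt_mul_of_pos_left (one_add_mul_self_lt_rpow_one_add hxy hxy' hα) hy

variable {m : Type*} [Fintype m] [DecidableEq m]

section DoublyStochastic

variable {c : Matrix m m ℝ} (hc : c ∈ doublyStochastic ℝ m) {x y : m → ℝ}
  (hx1 : ∑ i, x i = 1) (hy1 : ∑ j, y j = 1)
include hc hx1 hy1

theorem sum_sum_mul_mul_sub_mul_eq_one (α : ℝ) :
    ∑ i, ∑ j, c i j * (α * x i - (α - 1) * y j) = 1 := by
  have hrow : ∑ i, ∑ j, c i j * (α * x i) = α := by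
    simp_rw [← Finset.sum_mul, sum_row_of_mem_doublyStochastic hc, one_mul, ← Finset.mul_sum,
      hx1, mul_one]
  have hcol : ∑ i, ∑ j, c i j * ((α - 1) * y j) = α - 1 := by
    rw [Finset.sum_comm]
    simp_rw [← Finset.sum_mul, sum_col_of_mem_doublyStochastic hc, one_mul, ← Finset.mul_sum,
      hy1, mul_one]
  simp only [mul_sub, Finset.sum_sub_distrib, hrow, hcol]
  ring

variable (hx : ∀ i, 0 < x i) (hy : ∀ j, 0 < y j)
include hx hy

theorem one_le_sum_sum_mul_rpow_mul_rpow {α : ℝ} (hα : 1 ≤ α) :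
    1 ≤ ∑ i, ∑ j, c i j * (x i ^ α * y j ^ (1 - α)) :=
  (sum_sum_mul_mul_sub_mul_eq_one hc hx1 hy1 α).symm.le.trans <|
    Finset.sum_le_sum fun i _ => Finset.sum_le_sum fun j _ =>
      mul_le_mul_of_nonneg_left (mul_sub_mul_le_rpow_mul_rpow (hx i) (hy j) hα)
        (nonneg_of_mem_doublyStochastic hc)

theorem one_lt_sum_sum_mul_rpow_mul_rpow {α : ℝ} (hα : 1 < α) {i j : m} (hcij : c i j ≠ 0)
    (hne : x i ≠ y j) : 1 < ∑ i, ∑ j, c i j * (x i ^ α * y j ^ (1 - α)) := by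
  have hle (i j : m) :
      c i j * (α * x i - (α - 1) * y j) ≤ c i j * (x i ^ α * y j ^ (1 - α)) :=
    mul_le_mul_of_nonneg_left (mul_sub_mul_le_rpow_mul_rpow (hx i) (hy j) hα.le)
      (nonneg_of_mem_doublyStochastic hc)
  have hlt : c i j * (α * x i - (α - 1) * y j) < c i j * (x i ^ α * y j ^ (1 - α)) :=
    mul_lt_mul_of_pos_left (mul_sub_mul_lt_rpow_mul_rpow (hx i) (hy j) hα hne)
      ((nonneg_of_mem_doublyStochastic hc).lt_of_ne' hcij)
  refine (sum_sum_mul_mul_sub_mul_eq_one hc hx1 hy1 α).symm.trans_lt ?_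
  exact Finset.sum_lt_sum (fun i _ => Finset.sum_le_sum fun j _ => hle i j) ⟨i, Finset.mem_univ _,
    Finset.sum_lt_sum (fun j _ => hle i j) ⟨j, Finset.mem_univ _, hlt⟩⟩

end DoublyStochastic

namespace Matrix

theorem IsHermitian.eq_conj_diagonal {A : Matrix m m ℂ} (hA : A.IsHermitian) :
    A = hA.eigenvectorUnitary * diagonal (fun i => (hA.eigenvalues i : ℂ)) *
      star (hA.eigenvectorUnitary : Matrix m m ℂ) :=
  hA.spectral_theorem

theorem IsHermitian.mpow_eq {A : Matrix m m ℂ} (hA : A.IsHermitian) (r : ℝ) :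
    mpow A r = hA.eigenvectorUnitary * diagonal (fun i => ((hA.eigenvalues i ^ r : ℝ) : ℂ)) *
      star (hA.eigenvectorUnitary : Matrix m m ℂ) :=
  dif_pos hA

section UnitaryConj

variable {V : Matrix m m ℂ}

theorem isHermitian_conj_diagonal (U : Matrix m m ℂ) (d : m → ℝ) :
    (U * diagonal (fun i => (d i : ℂ)) * star U).IsHermitian :=
  isHermitian_mul_mul_conjTranspose _ (isHermitian_diagonal_iff.2 fun _ => Complex.conj_ofReal _)

theorem smul_conj_diagonal (U : Matrix m m ℂ) (a : ℝ) (d : m → ℝ) :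
    (a : ℂ) • (U * diagonal (fun i => (d i : ℂ)) * star U) =
      U * diagonal (fun i => ((a * d i : ℝ) : ℂ)) * star U := by
  rw [← smul_mul_assoc, ← mul_smul_comm, ← diagonal_smul]
  simp only [Pi.smul_def, smul_eq_mul, Complex.ofReal_mul]

variable {U : Matrix m m ℂ} (hU : U ∈ unitaryGroup m ℂ)
include hU

theorem conj_diagonal_eq_conj_diagonal_iff (hV : V ∈ unitaryGroup m ℂ) {d e : m → ℂ} :
    V * diagonal e * star V = U * diagonal d * star U ↔
      ∀ i j, (star U * V) i j ≠ 0 → e j = d i := by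
  set M := star U * V
  have hM : M ∈ unitaryGroup m ℂ := Submonoid.mul_mem _ (Unitary.star_mem hU) hV
  have hVM : V = U * M := by rw [← mul_assoc, Unitary.mul_star_self_of_mem hU, one_mul]
  have hUu : IsUnit U := Unitary.isUnit_coe (U := ⟨U, hU⟩)
  have hMu : IsUnit M := Unitary.isUnit_coe (U := ⟨M, hM⟩)
  calc _ ↔ U * (M * diagonal e * star M) * star U = U * diagonal d * star U := by
        rw [hVM, star_mul]
        simp only [mul_assoc]
    _ ↔ M * diagonal e * star M * M = diagonal d * M := by
        rw [hUu.star.mul_left_inj, hUu.mul_right_inj, hMu.mul_left_inj]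
    _ ↔ M * diagonal e = diagonal d * M := by
        rw [mul_assoc _ (star M), Unitary.star_mul_self_of_mem hM, mul_one]
    _ ↔ _ := by
        simp only [← Matrix.ext_iff, mul_diagonal, diagonal_mul, mul_comm (d _),
          mul_eq_mul_left_iff, or_iff_not_imp_right]

theorem posDef_conj_diagonal {d : m → ℝ} (hd : ∀ i, 0 < d i) :
    (U * diagonal (fun i => (d i : ℂ)) * star U).PosDef :=
  (Unitary.isUnit_coe (U := ⟨U, hU⟩)).posDef_star_right_conjugate_iff.2
    (posDef_diagonal_iff.2 fun i => by exact_mod_cast hd i)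

theorem conj_diagonal_mul_conj_diagonal (d e : m → ℂ) :
    U * diagonal d * star U * (U * diagonal e * star U) =
      U * diagonal (fun i => d i * e i) * star U := by
  simp only [mul_assoc, ← mul_assoc (star U), Unitary.star_mul_self_of_mem hU, one_mul,
    ← mul_assoc (diagonal d), diagonal_mul_diagonal]

theorem trace_conj_diagonal_mul_conj_diagonal (d e : m → ℂ) :
    (U * diagonal d * star U * (V * diagonal e * star V)).trace =
      ∑ i, ∑ j, Complex.normSq ((star U * V) i j) * (d i * e j) := by
  set M := star U * V
  have hVM : V = U * M := by rw [← mul_assoc, Unitary.mul_star_self_of_mem hU, one_mul]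
  have hconj : U * diagonal d * star U * (U * M * diagonal e * star (U * M)) =
      U * (diagonal d * M * diagonal e * star M) * star U := by
    simp only [star_mul, mul_assoc, ← mul_assoc (star U), Unitary.star_mul_self_of_mem hU,
      one_mul]
  rw [hVM, hconj, trace_mul_cycle, Unitary.star_mul_self_of_mem hU, one_mul]
  simp only [trace, diag, mul_apply, diagonal_apply, ite_mul, mul_ite, zero_mul, mul_zero,
    Finset.sum_ite_eq, Finset.sum_ite_eq', Finset.mem_univ, if_true, star_apply,
    Complex.star_def, Complex.normSq_eq_conj_mul_self]
  exact Finset.sum_congr rfl fun i _ => Finset.sum_congr rfl fun j _ => by ring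

theorem normSq_mem_doublyStochastic :
    (of fun i j => Complex.normSq (U i j)) ∈ doublyStochastic ℝ m := by
  have hrow (i : m) : ∑ j, Complex.normSq (U i j) = 1 := by
    have : (U * star U) i i = (1 : Matrix m m ℂ) i i := by
      rw [Unitary.mul_star_self_of_mem hU]
    simp only [mul_apply, star_apply, one_apply_eq, Complex.star_def, Complex.mul_conj] at this
    exact_mod_cast this
  have hcol (j : m) : ∑ i, Complex.normSq (U i j) = 1 := by
    have : (star U * U) j j = (1 : Matrix m m ℂ) j j := by
      rw [Unitary.star_mul_self_of_mem hU]
    simp only [mul_apply, star_apply, one_apply_eq, Complex.star_def,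
      ← Complex.normSq_eq_conj_mul_self] at this
    exact_mod_cast this
  exact mem_doublyStochastic_iff_sum.2 ⟨fun i j => Complex.normSq_nonneg _, hrow, hcol⟩

theorem mpow_conj_diagonal (d : m → ℝ) (r : ℝ) :
    mpow (U * diagonal (fun i => (d i : ℂ)) * star U) r =
      U * diagonal (fun i => ((d i ^ r : ℝ) : ℂ)) * star U := by
  have hA := isHermitian_conj_diagonal U d
  have hE := hA.eigenvectorUnitary.2
  -- The two diagonalizations agree where their eigenbases overlap, hence so do the `r`-th powers.
  have hcompat := (conj_diagonal_eq_conj_diagonal_iff hE hU).1 hA.eq_conj_diagonal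
  rw [hA.mpow_eq]
  refine ((conj_diagonal_eq_conj_diagonal_iff hE hU).2 fun i j hij => ?_).symm
  rw [Complex.ofReal_inj.1 (hcompat i j hij)]

end UnitaryConj

variable {A B : Matrix m m ℂ}

theorem IsHermitian.mpow_one (hA : A.IsHermitian) : mpow A 1 = A := by
  simp only [hA.mpow_eq, Real.rpow_one]
  exact hA.eq_conj_diagonal.symm

theorem PosDef.posDef_mpow (hA : A.PosDef) (r : ℝ) : (mpow A r).PosDef := by
  rw [hA.isHermitian.mpow_eq]
  exact posDef_conj_diagonal hA.isHermitian.eigenvectorUnitary.2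
    fun i => Real.rpow_pos_of_pos (hA.eigenvalues_pos i) r

theorem PosSemidef.mpow_mpow (hA : A.PosSemidef) (r s : ℝ) :
    mpow (mpow A r) s = mpow A (r * s) := by
  simp only [hA.isHermitian.mpow_eq r, mpow_conj_diagonal hA.isHermitian.eigenvectorUnitary.2,
    hA.isHermitian.mpow_eq, ← Real.rpow_mul (hA.eigenvalues_nonneg _)]

theorem PosSemidef.mpow_smul (hA : A.PosSemidef) {c : ℝ} (hc : 0 ≤ c) (r : ℝ) :
    mpow ((c : ℂ) • A) r = ((c ^ r : ℝ) : ℂ) • mpow A r := by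
  conv_lhs => rw [hA.isHermitian.eq_conj_diagonal]
  rw [smul_conj_diagonal, mpow_conj_diagonal hA.isHermitian.eigenvectorUnitary.2,
    hA.isHermitian.mpow_eq, smul_conj_diagonal]
  simp only [Real.mul_rpow hc (hA.eigenvalues_nonneg _)]

theorem PosDef.mpow_mul_mpow (hA : A.PosDef) (r s : ℝ) :
    mpow A r * mpow A s = mpow A (r + s) := by
  simp only [hA.isHermitian.mpow_eq, conj_diagonal_mul_conj_diagonal
    hA.isHermitian.eigenvectorUnitary.2, ← Complex.ofReal_mul,
    ← Real.rpow_add (hA.eigenvalues_pos _)]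

theorem IsHermitian.re_trace_mpow_mul_mpow (hA : A.IsHermitian) (hB : B.IsHermitian) (r s : ℝ) :
    (mpow A r * mpow B s).trace.re =
      ∑ i, ∑ j, Complex.normSq
          ((star (hA.eigenvectorUnitary : Matrix m m ℂ) * hB.eigenvectorUnitary) i j) *
        (hA.eigenvalues i ^ r * hB.eigenvalues j ^ s) := by
  simp only [hA.mpow_eq, hB.mpow_eq, trace_conj_diagonal_mul_conj_diagonal
    hA.eigenvectorUnitary.2, Complex.re_sum, ← Complex.ofReal_mul,
    Complex.ofReal_re]

theorem IsHermitian.sum_eigenvalues_eq_one (hA : A.IsHermitian) (htr : A.trace = 1) :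
    ∑ i, hA.eigenvalues i = 1 := by
  simpa using congrArg Complex.re (hA.trace_eq_sum_eigenvalues.symm.trans htr)

end Matrix

section PetzRenyi

variable {ω₀ ω : Matrix m m ℂ} (h₀ : ω₀.PosDef) (h : ω.PosDef)
  (htr₀ : ω₀.trace = 1) (htr : ω.trace = 1)
include h₀ h htr₀ htr

theorem one_le_re_trace_mpow_mul_mpow {α : ℝ} (hα : 1 ≤ α) :
    1 ≤ (mpow ω₀ α * mpow ω (1 - α)).trace.re := by
  have hc := Matrix.normSq_mem_doublyStochastic
    (Submonoid.mul_mem _ (Unitary.star_mem h₀.isHermitian.eigenvectorUnitary.2)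
      h.isHermitian.eigenvectorUnitary.2)
  rw [h₀.isHermitian.re_trace_mpow_mul_mpow h.isHermitian]
  exact one_le_sum_sum_mul_rpow_mul_rpow hc (h₀.isHermitian.sum_eigenvalues_eq_one htr₀)
    (h.isHermitian.sum_eigenvalues_eq_one htr) h₀.eigenvalues_pos h.eigenvalues_pos hα

theorem eq_of_re_trace_mpow_mul_mpow_le_one {α : ℝ} (hα : 1 < α)
    (hle : (mpow ω₀ α * mpow ω (1 - α)).trace.re ≤ 1) : ω = ω₀ := by
  have hE₀ := h₀.isHermitian.eigenvectorUnitary.2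
  have hE := h.isHermitian.eigenvectorUnitary.2
  have hc := Matrix.normSq_mem_doublyStochastic (Submonoid.mul_mem _ (Unitary.star_mem hE₀) hE)
  rw [h₀.isHermitian.re_trace_mpow_mul_mpow h.isHermitian] at hle
  calc ω = _ := h.isHermitian.eq_conj_diagonal
    _ = _ := (Matrix.conj_diagonal_eq_conj_diagonal_iff hE₀ hE).2 fun i j hij => ?_
    _ = ω₀ := h₀.isHermitian.eq_conj_diagonal.symm
  by_contra hne
  refine hle.not_gt (one_lt_sum_sum_mul_rpow_mul_rpow hc
    (h₀.isHermitian.sum_eigenvalues_eq_one htr₀) (h.isHermitian.sum_eigenvalues_eq_one htr)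
    h₀.eigenvalues_pos h.eigenvalues_pos hα (Complex.normSq_pos.2 hij).ne' fun hxy => hne ?_)
  rw [hxy]

end PetzRenyi

theorem isLeast_re_trace_mul_mpow [Nonempty m] {Y : Matrix m m ℂ} (hY : Y.PosDef) {α q : ℝ}
    (hα : 1 < α) (hqα : q * α = 1) :
    IsLeast {x : ℝ | ∃ ω : Matrix m m ℂ, ω.PosDef ∧ ω.trace = 1 ∧
        x = ((Y * mpow ω (1 - α)).trace).re}
      (((mpow Y q).trace).re ^ α) ∧
    ∀ ω : Matrix m m ℂ, ω.PosDef → ω.trace = 1 →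
      ((Y * mpow ω (1 - α)).trace).re = ((mpow Y q).trace).re ^ α →
      ω = (1 / (mpow Y q).trace) • mpow Y q := by
  set S := ((mpow Y q).trace).re
  have hYq := hY.posDef_mpow q
  have htrS : (mpow Y q).trace = S :=
    Complex.eq_re_of_ofReal_le (r := 0) (by simpa using hYq.trace_pos.le)
  have hS : 0 < S := by simpa [htrS] using hYq.trace_pos
  set ω₀ := (1 / (mpow Y q).trace) • mpow Y q with hω₀_def
  have hω₀ : ω₀ = ((S⁻¹ : ℝ) : ℂ) • mpow Y q := by
    rw [hω₀_def, htrS, one_div, Complex.ofReal_inv]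
  have h₀ : ω₀.PosDef := by
    rw [hω₀, Complex.coe_smul]
    exact hYq.smul (inv_pos.2 hS)
  have htr₀ : ω₀.trace = 1 := by
    rw [trace_smul, htrS, smul_eq_mul, one_div, inv_mul_cancel₀ (by exact_mod_cast hS.ne')]
  have hY_eq : Y = ((S ^ α : ℝ) : ℂ) • mpow ω₀ α := by
    rw [hω₀, hYq.posSemidef.mpow_smul (inv_nonneg.2 hS.le), hY.posSemidef.mpow_mpow, hqα,
      hY.isHermitian.mpow_one, smul_smul, ← Complex.ofReal_mul, ← Real.mul_rpow hS.le
      (inv_nonneg.2 hS.le), mul_inv_cancel₀ hS.ne', Real.one_rpow, Complex.ofReal_one, one_smul]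
  have hval (ω : Matrix m m ℂ) : ((Y * mpow ω (1 - α)).trace).re =
      S ^ α * ((mpow ω₀ α * mpow ω (1 - α)).trace).re := by
    rw [hY_eq, smul_mul_assoc, trace_smul, smul_eq_mul, Complex.re_ofReal_mul]
  have hval₀ : ((mpow ω₀ α * mpow ω₀ (1 - α)).trace).re = 1 := by
    rw [h₀.mpow_mul_mpow, add_sub_cancel, h₀.isHermitian.mpow_one, htr₀, Complex.one_re]
  have hSα : 0 < S ^ α := Real.rpow_pos_of_pos hS α
  refine ⟨⟨⟨ω₀, h₀, htr₀, ?_⟩, ?_⟩, fun ω h htr heq => ?_⟩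
  · rw [hval, hval₀, mul_one]
  · rintro _ ⟨ω, h, htr, rfl⟩
    rw [hval]
    exact le_mul_of_one_le_right hSα.le (one_le_re_trace_mpow_mul_mpow h₀ h htr₀ htr hα.le)
  · rw [hval, mul_eq_left₀ hSα.ne'] at heq
    exact eq_of_re_trace_mpow_mul_mpow_le_one h₀ h htr₀ htr hα heq.le

theorem araki_masuda_inf_general {n : ℕ} (ρ σ : Matrix (Fin n) (Fin n) ℂ)
    (hρ : ρ.PosDef) (hσ : σ.PosDef) (hρ1 : ρ.trace = 1)
    (p : ℝ) (hp1 : 1 ≤ p) (hp2 : p < 2) :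
    letI Y : Matrix (Fin n) (Fin n) ℂ := mpow ρ (1/2) * mpow σ (2/p - 1) * mpow ρ (1/2)
    IsLeast
      {x : ℝ | ∃ ω : Matrix (Fin n) (Fin n) ℂ, ω.PosDef ∧ ω.trace = 1 ∧
        x = ((Y * mpow ω (1 - 2/p)).trace).re}
      (((mpow Y (p/2)).trace).re ^ (2/p)) ∧
    ∀ ω : Matrix (Fin n) (Fin n) ℂ, ω.PosDef → ω.trace = 1 →
      ((Y * mpow ω (1 - 2/p)).trace).re = ((mpow Y (p/2)).trace).re ^ (2/p) →
      ω = (1 / (mpow Y (p/2)).trace) • mpow Y (p/2) := by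
  have hp : 0 < p := by linarith
  have : Nonempty (Fin n) := by
    refine Fin.pos_iff_nonempty.1 (Nat.pos_of_ne_zero fun hn => ?_)
    subst hn
    simp [trace] at hρ1
  have hR := hρ.posDef_mpow (1 / 2)
  have hY : (mpow ρ (1/2) * mpow σ (2/p - 1) * mpow ρ (1/2)).PosDef := by
    simpa only [star_eq_conjTranspose, hR.isHermitian.eq] using
      hR.isUnit.posDef_star_left_conjugate_iff.2 (hσ.posDef_mpow (2 / p - 1))
  exact isLeast_re_trace_mul_mpow hY (by rw [lt_div_iff₀ hp]; linarith) (by field_simp)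

/-- For `p ∈ [1,2)`, the infimum over positive definite density matrices `ω` of
`Tr(ρ^{1/2} σ^{2/p−1} ρ^{1/2} ω^{1−2/p})` equals `(Tr[(ρ^{1/2}σ^{2/p−1}ρ^{1/2})^{p/2}])^{2/p}`,
attained uniquely at `ω_* = Y^{p/2}/Tr(Y^{p/2})`. -/
theorem araki_masuda_inf {n : ℕ} (ρ σ : Matrix (Fin n) (Fin n) ℂ)
    (hρ : ρ.PosDef) (hσ : σ.PosDef) (hρ1 : ρ.trace = 1) (hσ1 : σ.trace = 1)
    (p : ℝ) (hp1 : 1 ≤ p) (hp2 : p < 2) :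
    letI Y : Matrix (Fin n) (Fin n) ℂ := mpow ρ (1/2) * mpow σ (2/p - 1) * mpow ρ (1/2)
    IsLeast
      {x : ℝ | ∃ ω : Matrix (Fin n) (Fin n) ℂ, ω.PosDef ∧ ω.trace = 1 ∧
        x = ((Y * mpow ω (1 - 2/p)).trace).re}
      (((mpow Y (p/2)).trace).re ^ (2/p)) ∧
    ∀ ω : Matrix (Fin n) (Fin n) ℂ, ω.PosDef → ω.trace = 1 →
      ((Y * mpow ω (1 - 2/p)).trace).re = ((mpow Y (p/2)).trace).re ^ (2/p) →
      ω = (1 / (mpow Y (p/2)).trace) • mpow Y (p/2) :=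
  araki_masuda_inf_general ρ σ hρ hσ hρ1 p hp1 hp2
end

section
/- For α ∈ (0,1) and x > 0, x^α = (sin(πα)/π) ∫₀^∞ t^α (1/t − 1/(t+x)) dt. -/
/-!
Substituting `t = x u` pulls out the factor `x ^ α` and leaves `∫₀^∞ u ^ (α - 1) / (1 + u) du`.
The substitution `u = y / (1 - y)` turns this into the beta integral `B(α, 1 - α)`, which
equals `Γ(α) Γ(1 - α) = π / sin (π α)` by the reflection formula.
-/

open Real MeasureTheory Set

theorem integral_Ioo_rpow_mul_one_sub_rpow {a b : ℝ} (ha : 0 < a) (hb : 0 < b) :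
    ∫ y in Ioo (0:ℝ) 1, y ^ (a - 1) * (1 - y) ^ (b - 1) =
      Gamma a * Gamma b / Gamma (a + b) := by
  have hbeta : Complex.betaIntegral a b =
      ((∫ y in Ioo (0:ℝ) 1, y ^ (a - 1) * (1 - y) ^ (b - 1) : ℝ) : ℂ) := by
    rw [Complex.betaIntegral, intervalIntegral.integral_of_le zero_le_one,
      ← integral_Ioc_eq_integral_Ioo, ← integral_complex_ofReal]
    refine setIntegral_congr_fun measurableSet_Ioc fun y ⟨hy0, hy1⟩ => ?_
    push_cast
    rw [Complex.ofReal_cpow hy0.le, Complex.ofReal_cpow (sub_nonneg.2 hy1)]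
    push_cast
    rfl
  have := Complex.betaIntegral_eq_Gamma_mul_div a b (by simpa) (by simpa)
  rw [hbeta, ← Complex.ofReal_add, Complex.Gamma_ofReal, Complex.Gamma_ofReal,
    Complex.Gamma_ofReal] at this
  exact_mod_cast this

theorem integral_Ioi_rpow_mul_one_add_rpow_eq_integral_Ioo (a b : ℝ) :
    ∫ u in Ioi (0:ℝ), u ^ (a - 1) * (1 + u) ^ (-(a + b)) =
      ∫ y in Ioo (0:ℝ) 1, y ^ (a - 1) * (1 - y) ^ (b - 1) := by
  have himage : (fun y : ℝ => y / (1 - y)) '' Ioo 0 1 = Ioi 0 := by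
    ext u
    constructor
    · rintro ⟨y, ⟨hy0, hy1⟩, rfl⟩
      exact div_pos hy0 (sub_pos.2 hy1)
    · intro (hu : 0 < u)
      refine ⟨u / (1 + u), ⟨by positivity, (div_lt_one (by positivity)).2 (by linarith)⟩,
        ?_⟩
      field_simp
      ring
  have hderiv : ∀ y ∈ Ioo (0:ℝ) 1,
      HasDerivWithinAt (fun y : ℝ => y / (1 - y)) ((1 - y) ^ 2)⁻¹ (Ioo 0 1) y := by
    intro y ⟨_, hy1⟩
    have h := (hasDerivAt_id' y).div ((hasDerivAt_id' y).const_sub 1) (sub_pos.2 hy1).ne'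
    exact h.hasDerivWithinAt.congr_deriv (by ring)
  have hinj : InjOn (fun y : ℝ => y / (1 - y)) (Ioo 0 1) := by
    intro y ⟨_, hy1⟩ z ⟨_, hz1⟩ hyz
    have : (1:ℝ) - y ≠ 0 := (sub_pos.2 hy1).ne'
    have : (1:ℝ) - z ≠ 0 := (sub_pos.2 hz1).ne'
    field_simp at hyz
    linarith
  rw [← himage, integral_image_eq_integral_abs_deriv_smul measurableSet_Ioo hderiv hinj]
  refine setIntegral_congr_fun measurableSet_Ioo fun y ⟨hy0, hy1⟩ => ?_
  have h1y : 0 < 1 - y := sub_pos.2 hy1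
  have hsum : 1 + y / (1 - y) = (1 - y)⁻¹ := by field_simp; ring
  rw [smul_eq_mul, hsum, abs_of_pos (by positivity), div_rpow hy0.le h1y.le, inv_rpow h1y.le,
    ← rpow_neg h1y.le, neg_neg, ← rpow_natCast, ← rpow_neg h1y.le, Nat.cast_ofNat]
  have hexp : (1 - y) ^ (-2 : ℝ) * (1 - y) ^ (a + b) / (1 - y) ^ (a - 1) = (1 - y) ^ (b - 1) := by
    rw [← rpow_add h1y, ← rpow_sub h1y]
    ring_nf
  rw [← hexp]
  ring

theorem integral_Ioi_rpow_mul_comp_div (f : ℝ → ℝ) (a : ℝ) {x : ℝ} (hx : 0 < x) :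
    ∫ t in Ioi (0:ℝ), t ^ (a - 1) * f (t / x) =
      x ^ a * ∫ u in Ioi (0:ℝ), u ^ (a - 1) * f u := by
  have h := integral_comp_mul_left_Ioi (fun t => t ^ (a - 1) * f (t / x)) 0 hx
  have hscaled : ∫ u in Ioi (0:ℝ), (x * u) ^ (a - 1) * f (x * u / x) =
      x ^ (a - 1) * ∫ u in Ioi (0:ℝ), u ^ (a - 1) * f u := by
    rw [← integral_const_mul]
    refine setIntegral_congr_fun measurableSet_Ioi fun u (hu : 0 < u) => ?_
    rw [mul_rpow hx.le hu.le, mul_div_cancel_left₀ u hx.ne', mul_assoc]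
  rw [mul_zero, smul_eq_mul, hscaled, rpow_sub_one hx.ne', eq_inv_mul_iff_mul_eq₀ hx.ne'] at h
  rw [← h]
  field_simp

theorem integral_Ioi_rpow_mul_one_add_inv {a : ℝ} (ha0 : 0 < a) (ha1 : a < 1) :
    ∫ u in Ioi (0:ℝ), u ^ (a - 1) * (1 + u)⁻¹ = π / sin (π * a) := by
  have h := integral_Ioi_rpow_mul_one_add_rpow_eq_integral_Ioo a (1 - a)
  rw [integral_Ioo_rpow_mul_one_sub_rpow ha0 (sub_pos.2 ha1), add_sub_cancel, Gamma_one,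
    div_one, Gamma_mul_Gamma_one_sub] at h
  simpa only [rpow_neg_one] using h

/-- For `α ∈ (0,1)` and `x > 0`,
`x^α = (sin(πα)/π) ∫₀^∞ t^α (1/t − 1/(t+x)) dt`. -/
theorem rpow_integral_rep_pos (α x : ℝ) (hα : α ∈ Set.Ioo (0:ℝ) 1) (hx : 0 < x) :
    x ^ α = (Real.sin (Real.pi * α) / Real.pi) *
      ∫ t in Set.Ioi (0:ℝ), t ^ α * (1/t - 1/(t + x)) := by
  obtain ⟨hα0, hα1⟩ := hα
  have hintegrand : ∫ t in Ioi (0:ℝ), t ^ α * (1/t - 1/(t + x)) =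
      ∫ t in Ioi (0:ℝ), t ^ (α - 1) * (1 + t / x)⁻¹ := by
    refine setIntegral_congr_fun measurableSet_Ioi fun t (ht : 0 < t) => ?_
    rw [rpow_sub_one ht.ne']
    field_simp
    ring
  rw [hintegrand, integral_Ioi_rpow_mul_comp_div (fun u => (1 + u)⁻¹) α hx,
    integral_Ioi_rpow_mul_one_add_inv hα0 hα1]
  have hsin : sin (π * α) ≠ 0 :=
    (sin_pos_of_pos_of_lt_pi (by positivity) (by nlinarith [pi_pos])).ne'
  field_simp
end

section
/- Let U : H → K be a linear isometry between finite-dimensional Hilbert spaces (U*U = 1), let a be a self-adjoint operator on K, and set P = UU*. If (U*aU)² = U*a²U, then Pa = aP, i.e. a = PaP + QaQ with Q = 1 − P. -/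
/-!
Put `B = (1 - P) a U = aU - U(U*aU)`. Expanding with `U*U = 1` gives
`B*B = U*a²U - (U*aU)²`, so the equality case of Jensen's inequality says `B*B = 0`, i.e. `B = 0`:
`a` maps the range of `U` into itself, which is `aP = PaP`. Taking adjoints gives `Pa = PaP`,
hence `Pa = aP`, and an idempotent commuting with `a` splits it as `PaP + QaQ`.
-/

open LinearMap

theorem IsIdempotentElem.eq_mul_mul_add_one_sub_mul_mul_one_sub {R : Type*} [Ring R] {p a : R}
    (hp : IsIdempotentElem p) (hpa : Commute p a) :
    a = p * a * p + (1 - p) * a * (1 - p) := by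
  have hpap : p * a * p = p * a := by rw [mul_assoc, ← hpa.eq, ← mul_assoc, hp.eq]
  have hexpand : (1 - p) * a * (1 - p) = a - p * a - a * p + p * a * p := by noncomm_ring
  rw [hexpand, hpap, ← hpa.eq]
  abel

theorem IsStarProjection.commute_of_mul_eq_mul_mul {R : Type*} [Semigroup R] [StarMul R] {p a : R}
    (hp : IsStarProjection p) (ha : IsSelfAdjoint a) (h : a * p = p * a * p) : Commute p a := by
  have hstar : p * a = p * a * p := by
    simpa [star_mul, hp.isSelfAdjoint.star_eq, ha.star_eq, ← mul_assoc] using congrArg star h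
  rw [Commute, SemiconjBy, hstar, h]

namespace LinearMap

variable {𝕜 E F : Type*} [RCLike 𝕜]
  [NormedAddCommGroup E] [InnerProductSpace 𝕜 E] [FiniteDimensional 𝕜 E]
  [NormedAddCommGroup F] [InnerProductSpace 𝕜 F] [FiniteDimensional 𝕜 F]

@[simp]
theorem adjoint_comp_self_eq_zero_iff {A : E →ₗ[𝕜] F} : A.adjoint ∘ₗ A = 0 ↔ A = 0 := by
  rw [← ker_eq_top, ker_adjoint_comp_self, ker_eq_top]

theorem isStarProjection_comp_adjoint {U : E →ₗ[𝕜] F} (hU : U.adjoint ∘ₗ U = id) :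
    IsStarProjection (U ∘ₗ U.adjoint) where
  isIdempotentElem := by
    rw [IsIdempotentElem, Module.End.mul_eq_comp, comp_assoc, ← comp_assoc U.adjoint, hU, id_comp]
  isSelfAdjoint := by rw [isSelfAdjoint_iff', adjoint_comp, adjoint_adjoint]

theorem jensen_defect_eq_adjoint_comp_self {U : E →ₗ[𝕜] F} (hU : U.adjoint ∘ₗ U = id)
    {a : F →ₗ[𝕜] F} (ha : a.adjoint = a) :
    U.adjoint ∘ₗ (a ∘ₗ a) ∘ₗ U - (U.adjoint ∘ₗ a ∘ₗ U) ∘ₗ (U.adjoint ∘ₗ a ∘ₗ U) =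
      (a ∘ₗ U - U ∘ₗ U.adjoint ∘ₗ a ∘ₗ U).adjoint ∘ₗ (a ∘ₗ U - U ∘ₗ U.adjoint ∘ₗ a ∘ₗ U) := by
  have hU' (f : E →ₗ[𝕜] E) : U.adjoint ∘ₗ U ∘ₗ f = f := by rw [← comp_assoc, hU, id_comp]
  simp only [map_sub, adjoint_comp, adjoint_adjoint, ha, sub_comp, comp_sub, comp_assoc, hU']
  abel

theorem comp_eq_of_jensen_equality {U : E →ₗ[𝕜] F} (hU : U.adjoint ∘ₗ U = id)
    {a : F →ₗ[𝕜] F} (ha : a.adjoint = a)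
    (heq : (U.adjoint ∘ₗ a ∘ₗ U) ∘ₗ (U.adjoint ∘ₗ a ∘ₗ U) = U.adjoint ∘ₗ (a ∘ₗ a) ∘ₗ U) :
    a ∘ₗ U = U ∘ₗ U.adjoint ∘ₗ a ∘ₗ U := by
  rw [← sub_eq_zero, ← adjoint_comp_self_eq_zero_iff, ← jensen_defect_eq_adjoint_comp_self hU ha,
    heq, sub_self]

end LinearMap

/-- Equality in Jensen's operator inequality: if `U` is a linear isometry (`U*U = 1`),
`a` is self-adjoint and `(U*aU)² = U*a²U`, then `a` commutes with `P = UU*`, i.e.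
`a = PaP + QaQ` with `Q = 1 − P`. -/
theorem jensen_equality_commutes {H K : Type*}
    [NormedAddCommGroup H] [InnerProductSpace ℂ H] [FiniteDimensional ℂ H]
    [NormedAddCommGroup K] [InnerProductSpace ℂ K] [FiniteDimensional ℂ K]
    (U : H →ₗ[ℂ] K) (hU : LinearMap.adjoint U ∘ₗ U = LinearMap.id)
    (a : K →ₗ[ℂ] K) (ha : LinearMap.adjoint a = a)
    (heq : (LinearMap.adjoint U ∘ₗ a ∘ₗ U) ∘ₗ (LinearMap.adjoint U ∘ₗ a ∘ₗ U) =
      LinearMap.adjoint U ∘ₗ (a ∘ₗ a) ∘ₗ U) :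
    (U ∘ₗ LinearMap.adjoint U) ∘ₗ a = a ∘ₗ (U ∘ₗ LinearMap.adjoint U) ∧
    a = (U ∘ₗ LinearMap.adjoint U) ∘ₗ a ∘ₗ (U ∘ₗ LinearMap.adjoint U) +
      (LinearMap.id - U ∘ₗ LinearMap.adjoint U) ∘ₗ a ∘ₗ
        (LinearMap.id - U ∘ₗ LinearMap.adjoint U) := by
  have hP := isStarProjection_comp_adjoint hU
  have haP : a * (U ∘ₗ U.adjoint) = (U ∘ₗ U.adjoint) * a * (U ∘ₗ U.adjoint) := by
    simp only [Module.End.mul_eq_comp]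
    rw [← comp_assoc, comp_eq_of_jensen_equality hU ha heq]
    simp only [comp_assoc]
  have hcomm := hP.commute_of_mul_eq_mul_mul (isSelfAdjoint_iff'.mpr ha) haP
  refine ⟨hcomm, ?_⟩
  simpa only [Module.End.mul_eq_comp, Module.End.one_eq_id, comp_assoc] using
    hP.isIdempotentElem.eq_mul_mul_add_one_sub_mul_mul_one_sub hcomm
end

section
/- For positive definite matrices ρ, σ on a finite-dimensional Hilbert space and α ∈ (−1,0) ∪ (0,1), the matrix identity σ^{−α} (ρ σ^{−α})^{−α/(α−1)} = σ^{−α} ♯_{−α/(1−α)} ρ^{−1} holds, where M^μ for M = ρσ^{−α} is defined via the similarity to σ^{−α/2} ρ σ^{−α/2}. -/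
open Matrix ComplexOrder

/-- Real power of `ρ σ^{-α}`, defined via its similarity to the positive definite matrix
`σ^{-α/2} ρ σ^{-α/2}`:  `(ρσ^{-α})^μ := σ^{α/2} (σ^{-α/2} ρ σ^{-α/2})^μ σ^{-α/2}`. -/
noncomputable def spow {m : Type*} [Fintype m] [DecidableEq m]
    (ρ σ : Matrix m m ℂ) (α μ : ℝ) : Matrix m m ℂ :=
  mpow σ (α/2) * mpow (mpow σ (-(α/2)) * ρ * mpow σ (-(α/2))) μ * mpow σ (-(α/2))

/-! Both sides are congruences by `σ^{-α/2}` of a power of `X = σ^{-α/2} ρ σ^{-α/2}`: on the left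
`σ^{-α} σ^{α/2} = σ^{-α/2}`, and in the geometric mean the middle factor
`σ^{α/2} ρ⁻¹ σ^{α/2}` is `X⁻¹`, so `(X⁻¹)^{-α/(1-α)} = X^{-α/(α-1)}`. On positive definite
matrices `mpow` is the `CFC.rpow` of the matrix order, which supplies the power laws. -/

open scoped MatrixOrder

namespace Matrix.PosDef

variable {m : Type*} [Fintype m] [DecidableEq m] {A B : Matrix m m ℂ}

theorem mpow_eq_rpow (hA : A.PosDef) (r : ℝ) : mpow A r = A ^ r := by
  rw [CFC.rpow_eq_cfc_real hA.posSemidef.nonneg, mpow, dif_pos hA.isHermitian,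
    hA.isHermitian.cfc_eq]
  rfl

theorem posDef_mpow_s17 (hA : A.PosDef) (r : ℝ) : (mpow A r).PosDef := by
  have := hA.isStrictlyPositive
  rw [hA.mpow_eq_rpow]
  exact (IsStrictlyPositive.rpow A r).posDef

theorem mpow_add (hA : A.PosDef) (r s : ℝ) : mpow A (r + s) = mpow A r * mpow A s := by
  simp only [hA.mpow_eq_rpow, CFC.rpow_add hA.isUnit]

theorem mpow_mpow (hA : A.PosDef) (r s : ℝ) : mpow (mpow A r) s = mpow A (r * s) := by
  have := hA.isStrictlyPositive
  rw [(hA.posDef_mpow_s17 r).mpow_eq_rpow, hA.mpow_eq_rpow, hA.mpow_eq_rpow]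
  rcases eq_or_ne r 0 with rfl | hr
  · rw [zero_mul, CFC.rpow_zero A, CFC.one_rpow]
  · exact CFC.rpow_rpow A r s hr

theorem inv_eq_mpow_neg_one (hA : A.PosDef) : A⁻¹ = mpow A (-1) := by
  have := hA.isStrictlyPositive
  rw [nonsing_inv_eq_ringInverse, CFC.inverse_eq_rpow_neg_one, hA.mpow_eq_rpow]

theorem inv_mpow (hA : A.PosDef) (r : ℝ) : (mpow A r)⁻¹ = mpow A (-r) := by
  rw [(hA.posDef_mpow_s17 r).inv_eq_mpow_neg_one, hA.mpow_mpow, mul_neg_one]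

theorem mpow_inv (hA : A.PosDef) (r : ℝ) : mpow A⁻¹ r = mpow A (-r) := by
  rw [hA.inv_eq_mpow_neg_one, hA.mpow_mpow, neg_one_mul]

theorem mul_mul_self_of_posDef (hB : B.PosDef) (hA : A.PosDef) : (A * B * A).PosDef := by
  simpa only [hA.isHermitian.eq] using
    hB.conjTranspose_mul_mul_same (mulVec_injective_iff_isUnit.mpr hA.isUnit)

end Matrix.PosDef

theorem gmean_inv_right {m : Type*} [Fintype m] [DecidableEq m] {A B : Matrix m m ℂ}
    (hA : A.PosDef) (hB : B.PosDef) (lam : ℝ) :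
    gmean A B⁻¹ lam =
      mpow A (1/2) * mpow (mpow A (1/2) * B * mpow A (1/2)) (-lam) * mpow A (1/2) := by
  have hC := hB.mul_mul_self_of_posDef (hA.posDef_mpow_s17 (1/2))
  rw [gmean, ← hC.mpow_inv, Matrix.mul_inv_rev, Matrix.mul_inv_rev, hA.inv_mpow]
  simp only [Matrix.mul_assoc]

theorem sigma_pow_geom_mean_general {n : ℕ} (ρ σ : Matrix (Fin n) (Fin n) ℂ)
    (hρ : ρ.PosDef) (hσ : σ.PosDef)
    (α : ℝ) :
    mpow σ (-α) * spow ρ σ α (-α/(α - 1)) = gmean (mpow σ (-α)) ρ⁻¹ (-α/(1 - α)) := by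
  have hμ : -(-α / (1 - α)) = -α / (α - 1) := by rw [← div_neg, neg_sub]
  have hsqrt : mpow (mpow σ (-α)) (1/2) = mpow σ (-(α/2)) := by
    rw [hσ.mpow_mpow]; ring_nf
  have hσα : mpow σ (-α) * mpow σ (α/2) = mpow σ (-(α/2)) := by
    rw [← hσ.mpow_add]; ring_nf
  rw [gmean_inv_right (hσ.posDef_mpow_s17 (-α)) hρ, hsqrt, hμ, spow, ← Matrix.mul_assoc,
    ← Matrix.mul_assoc, hσα]

/-- `σ^{−α} (ρ σ^{−α})^{−α/(α−1)} = σ^{−α} ♯_{−α/(1−α)} ρ^{−1}`. -/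
theorem sigma_pow_geom_mean {n : ℕ} (ρ σ : Matrix (Fin n) (Fin n) ℂ)
    (hρ : ρ.PosDef) (hσ : σ.PosDef)
    (α : ℝ) (hα : α ∈ Set.Ioo (-1:ℝ) 1) (hα0 : α ≠ 0) :
    mpow σ (-α) * spow ρ σ α (-α/(α - 1)) = gmean (mpow σ (-α)) ρ⁻¹ (-α/(1 - α)) :=
  sigma_pow_geom_mean_general ρ σ hρ hσ α
end
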